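/- If d : A → A is an n-multiplicative derivation on a commutative algebra A, then the function f(x₁,...,x_k) := d(x₁+⋯+x_k) − d(x₁) − ⋯ − d(x_k) is a nullifying function; in particular d is additive if and only if f is identically zero. -/
import Mathlib


/-- Composite of left multiplications: `Lmul [t₁,…,t_r] x = t₁ * (t₂ * (⋯ * (t_r * x)))`. -/
def Lmul {A : Type*} [Mul A] (ts : List A) (x : A) : A := ts.foldr (· * ·) x

/-- A nullifying function on the nonempty finite sequences of `A`, with associated
positive integer `r` for axiom (V). -/
def IsNullifying {A : Type*} [NonUnitalNonAssocCommRing A] (f : List A → A) (r : ℕ) : Prop :=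
  0 < r ∧
  -- (I) permutation invariance
  (∀ l l' : List A, l.Perm l' → f l = f l') ∧
  -- (II)
  (∀ s t : List A, s ≠ [] → t ≠ [] → (f (s ++ [t.sum]) = f (s ++ t) ↔ f t = 0)) ∧
  -- (III)
  (∀ x : A, f [x] = 0) ∧
  -- (IV)
  (∀ s : List A, s ≠ [] → f (s ++ [(0 : A)]) = f s) ∧
  -- (V)
  (∀ ts : List A, ts.length = r → ∀ l : List A, Lmul ts (f l) = f (l.map (Lmul ts)))

lemma Lmul_cons {A : Type*} [Mul A] (a : A) (ts : List A) (x : A) :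
    Lmul (a :: ts) x = a * Lmul ts x := rfl

lemma Lmul_zero {A : Type*} [NonUnitalNonAssocCommRing A] (ts : List A) :
    Lmul ts (0 : A) = 0 := by
  induction ts with
  | nil => rfl
  | cons a ts ih => rw [Lmul_cons, ih, mul_zero]

lemma Lmul_add {A : Type*} [NonUnitalNonAssocCommRing A] (ts : List A) (x y : A) :
    Lmul ts (x + y) = Lmul ts x + Lmul ts y := by
  induction ts with
  | nil => rfl
  | cons a ts ih => rw [Lmul_cons, ih, mul_add, Lmul_cons, Lmul_cons]

lemma Lmul_sub {A : Type*} [NonUnitalNonAssocCommRing A] (ts : List A) (x y : A) :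
    Lmul ts (x - y) = Lmul ts x - Lmul ts y := by
  induction ts with
  | nil => rfl
  | cons a ts ih => rw [Lmul_cons, ih, mul_sub, Lmul_cons, Lmul_cons]

lemma Lmul_sum {A : Type*} [NonUnitalNonAssocCommRing A] (ts : List A) (l : List A) :
    (l.map (Lmul ts)).sum = Lmul ts l.sum := by
  induction l with
  | nil => simp [Lmul_zero]
  | cons a l ih => simp [ih, Lmul_add]

/-- the deviation-from-additivity function of an `n`-multiplicative
derivation is a nullifying function (with `r = n - 1`), and the derivation is additive
iff this function is identically zero. -/
theorem nmultDeriv_nullifying {F A : Type*} [Field F] [NonUnitalNonAssocCommRing A]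
    [Module F A] [SMulCommClass F A A] [IsScalarTower F A A]
    (n : ℕ) (hn : 2 ≤ n) (d : A → A)
    (hd : ∀ ts : List A, ts.length = n - 1 → ∀ x : A,
      d (Lmul ts x) =
        (∑ i ∈ Finset.range (n - 1), Lmul (ts.set i (d (ts.getD i 0))) x) + Lmul ts (d x)) :
    IsNullifying (fun l : List A => d l.sum - (l.map d).sum) (n - 1) ∧
    ((∀ x y : A, d (x + y) = d x + d y) ↔
      ∀ l : List A, l ≠ [] → d l.sum - (l.map d).sum = 0) := by
  have hr : 0 < n - 1 := by omega
  -- d 0 = 0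
  have hd0 : d 0 = 0 := by
    have h := hd (List.replicate (n - 1) 0) (by simp) 0
    have h0 : Lmul (List.replicate (n - 1) 0) (d 0) = 0 := by
      obtain ⟨m, hm⟩ : ∃ m, n - 1 = m + 1 := ⟨n - 2, by omega⟩
      rw [hm, List.replicate_succ, Lmul_cons, zero_mul]
    simp [Lmul_zero, h0] at h
    exact h
  constructor
  · refine ⟨hr, ?_, ?_, ?_, ?_, ?_⟩
    · intro l l' hp
      simp only
      rw [hp.sum_eq, (hp.map d).sum_eq]
    · intro s t _ _
      simp only [List.sum_append, List.map_append, List.sum_cons, List.sum_nil,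
        List.map_cons, List.map_nil, add_zero]
      rw [sub_right_injective.eq_iff, add_right_inj, ← sub_eq_zero]
    · intro x; simp
    · intro s _
      simp [hd0]
    · intro ts hts l
      set S : A → A := fun x =>
        ∑ i ∈ Finset.range (n - 1), Lmul (ts.set i (d (ts.getD i 0))) x with hS
      have hSadd : ∀ x y, S (x + y) = S x + S y := by
        intro x y; simp [hS, Lmul_add, Finset.sum_add_distrib]
      have hS0 : S 0 = 0 := by simp [hS, Lmul_zero]
      have hmapsum : ∀ l : List A,
          (l.map fun x => d (Lmul ts x)).sum = S l.sum + Lmul ts (l.map d).sum := by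
        intro l
        induction l with
        | nil => simp [hS0, Lmul_zero]
        | cons a l ih =>
          simp only [List.map_cons, List.sum_cons, ih, hd ts hts a, hSadd, Lmul_add]
          abel
      simp only
      rw [List.map_map, show (d ∘ Lmul ts) = fun x => d (Lmul ts x) from rfl,
        hmapsum, Lmul_sum, hd ts hts l.sum, Lmul_sub]
      abel
  · constructor
    · intro hadd l _
      have : ∀ l : List A, d l.sum = (l.map d).sum := by
        intro l
        induction l with
        | nil => simpa using hd0
        | cons a l ih => simp [hadd, ih]
      rw [this, sub_self]
    · intro h x y
      have := h [x, y] (by simp)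
      simp only [List.sum_cons, List.sum_nil, List.map_cons, List.map_nil, add_zero,
        sub_eq_zero] at this
      exact this
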